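/- Let f(x) = Σ_{j=1}^k v_j e^{2πi f_j x} be a k-sparse exponential sum. Then there is a universal constant C such that for every Δ > 0 and every t ∈ ℝ: |f(t)|² ≤ C · ( Σ_{i=1}^{2k} |f(t + iΔ)|² + Σ_{i=1}^{2k} |f(t − iΔ)|² ). -/

import Mathlib

/-!
The samples `m ↦ f (x + m Δ)`, `m < 2k`, of a `k`-sparse signal lie, whatever the base point `x`,
in the span `U ⊆ ℂ^{2k}` of the `k` geometric sequences `m ↦ e^{2πi f_j Δ m}`. The diagonal
entries `‖P e_l‖²` of the orthogonal projection `P` onto `U` add up to `dim U ≤ k`, so one of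
them is at most `1/2`. For `y ∈ U` we have `y_l = ⟪P e_l, y⟫`, and Cauchy–Schwarz then gives
`|y_l|² ≤ ∑_{j ≠ l} |y_j|²`. Choosing the base point so that sample `l` falls at `t` yields the
inequality with `C = 1`.
-/
open Finset Module

section

variable {𝕜 ι : Type*} [RCLike 𝕜] [Fintype ι] [DecidableEq ι]

theorem norm_sq_apply_le_sum_erase_of_apply_eq_inner {p y : EuclideanSpace 𝕜 ι} {l : ι}
    (hpl : p l = ((‖p‖ ^ 2 : ℝ) : 𝕜)) (hp : ‖p‖ ^ 2 ≤ 1 / 2) (hy : y l = inner 𝕜 p y) :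
    ‖y l‖ ^ 2 ≤ ∑ j ∈ univ.erase l, ‖y j‖ ^ 2 := by
  set a := ‖p‖ ^ 2 with ha_def
  set S := ∑ j ∈ univ.erase l, ‖y j‖ ^ 2
  have ha : 0 ≤ a := by positivity
  have hpl_norm : ‖p l‖ = a := by rw [hpl, RCLike.norm_ofReal, abs_of_nonneg ha]
  have hp_rest : ∑ j ∈ univ.erase l, ‖p j‖ ^ 2 = a - a ^ 2 := by
    rw [← hpl_norm, eq_sub_iff_add_eq, sum_erase_add _ _ (mem_univ l), hpl_norm, ha_def,
      EuclideanSpace.norm_sq_eq]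
  have hy_rest : ((1 - a : ℝ) : 𝕜) * y l = ∑ j ∈ univ.erase l, y j * starRingEnd 𝕜 (p j) := by
    rw [PiLp.inner_apply, ← add_sum_erase _ _ (mem_univ l)] at hy
    simp only [RCLike.inner_apply, hpl, RCLike.conj_ofReal] at hy
    push_cast
    linear_combination hy
  have hCS : (1 - a) ^ 2 * ‖y l‖ ^ 2 ≤ (a - a ^ 2) * S := by
    rw [← hp_rest, ← mul_pow]
    refine le_trans ?_ (mul_comm S _ ▸ sum_mul_sq_le_sq_mul_sq _ _ _)
    have h1a : 0 ≤ 1 - a := by linarith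
    gcongr
    calc (1 - a) * ‖y l‖ = ‖((1 - a : ℝ) : 𝕜) * y l‖ := by
          rw [norm_mul, RCLike.norm_ofReal, abs_of_nonneg h1a]
      _ ≤ _ := by rw [hy_rest]; exact (norm_sum_le _ _).trans (by simp)
  have hcoef : a - a ^ 2 ≤ (1 - a) ^ 2 := by nlinarith
  have hS : 0 ≤ S := by positivity
  exact le_of_mul_le_mul_left (hCS.trans (mul_le_mul_of_nonneg_right hcoef hS))
    (pow_pos (by linarith) 2)

variable (U : Submodule 𝕜 (EuclideanSpace 𝕜 ι))

theorem starProjection_single_apply_self (l : ι) :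
    U.starProjection (EuclideanSpace.single l 1) l =
      ((‖U.starProjection (EuclideanSpace.single l 1)‖ ^ 2 : ℝ) : 𝕜) := by
  rw [RCLike.ofReal_pow, ← inner_self_eq_norm_sq_to_K, U.inner_starProjection_left_eq_right,
    U.starProjection_eq_self_iff.mpr (U.starProjection_apply_mem _),
    EuclideanSpace.inner_single_left, map_one, one_mul]

theorem sum_norm_sq_starProjection_single :
    ∑ l, ‖U.starProjection (EuclideanSpace.single l (1 : 𝕜))‖ ^ 2 = finrank 𝕜 U := by
  have htrace := LinearMap.trace_eq_sum_inner (U.starProjection : _ →ₗ[𝕜] _)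
    (EuclideanSpace.basisFun ι 𝕜)
  have hproj : LinearMap.IsProj U (U.starProjection : _ →ₗ[𝕜] _) :=
    ⟨U.starProjection_apply_mem, fun _ hx ↦ U.starProjection_eq_self_iff.mpr hx⟩
  rw [hproj.trace] at htrace
  simp only [EuclideanSpace.basisFun_apply, ContinuousLinearMap.coe_coe,
    EuclideanSpace.inner_single_left, map_one, one_mul, starProjection_single_apply_self] at htrace
  exact_mod_cast htrace.symm

theorem exists_forall_mem_norm_sq_apply_le_sum_erase [Nonempty ι]
    (hU : 2 * finrank 𝕜 U ≤ Fintype.card ι) :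
    ∃ l, ∀ y ∈ U, ‖y l‖ ^ 2 ≤ ∑ j ∈ univ.erase l, ‖y j‖ ^ 2 := by
  have hsum : ∑ l, ‖U.starProjection (EuclideanSpace.single l (1 : 𝕜))‖ ^ 2 ≤ ∑ _ : ι, 1 / 2 := by
    rw [sum_norm_sq_starProjection_single, sum_const, card_univ, nsmul_eq_mul]
    have : (2 * finrank 𝕜 U : ℝ) ≤ Fintype.card ι := by exact_mod_cast hU
    linarith
  obtain ⟨l, -, hl⟩ := exists_le_of_sum_le univ_nonempty hsum
  refine ⟨l, fun y hy ↦ norm_sq_apply_le_sum_erase_of_apply_eq_inner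
    (starProjection_single_apply_self U l) hl ?_⟩
  rw [U.inner_starProjection_left_eq_right, U.starProjection_eq_self_iff.mpr hy,
    EuclideanSpace.inner_single_left, map_one, one_mul]

end

theorem sum_erase_sub_le_sum_Icc_add_sum_Icc_neg {n : ℕ} (g : ℤ → ℝ) (hg : 0 ≤ g) (l : Fin n) :
    ∑ j ∈ univ.erase l, g (j - l) ≤ ∑ i ∈ Icc 1 n, g i + ∑ i ∈ Icc 1 n, g (-i) := by
  let e : Fin n → ℕ ⊕ ℕ := fun j ↦ if l < j then .inl (j - l) else .inr (l - j)
  have he : ∀ j : Fin n, g (j - l) = Sum.elim (fun i : ℕ ↦ g i) (fun i : ℕ ↦ g (-i)) (e j) := by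
    intro j
    by_cases h : l < j
    · simp only [e, if_pos h, Sum.elim_inl]
      congr 1
      omega
    · simp only [e, if_neg h, Sum.elim_inr]
      congr 1
      omega
  rw [← sum_sumElim, sum_congr rfl fun j _ ↦ he j, ← sum_image]
  · refine sum_le_sum_of_subset_of_nonneg ?_ fun x _ _ ↦ ?_
    · intro x hx
      obtain ⟨j, hj, rfl⟩ := mem_image.mp hx
      have hjl : j ≠ l := ne_of_mem_erase hj
      have := Fin.val_ne_of_ne hjl
      by_cases h : l < j
      · simp only [e, if_pos h, inl_mem_disjSum, mem_Icc]
        omega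
      · simp only [e, if_neg h, inr_mem_disjSum, mem_Icc]
        omega
    · cases x <;> exact hg _
  · intro i _ j _ hij
    by_cases hi : l < i <;> by_cases hj : l < j <;>
      simp only [e, hi, hj, if_true, if_false, reduceCtorEq, Sum.inl.injEq, Sum.inr.injEq] at hij <;>
      omega

noncomputable def geometricSpan {k : ℕ} (z : Fin k → ℂ) (n : ℕ) :
    Submodule ℂ (EuclideanSpace ℂ (Fin n)) :=
  Submodule.span ℂ (Set.range fun j ↦ WithLp.toLp 2 fun m : Fin n ↦ z j ^ (m : ℕ))

theorem finrank_geometricSpan_le {k : ℕ} (z : Fin k → ℂ) (n : ℕ) :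
    finrank ℂ (geometricSpan z n) ≤ k :=
  (finrank_range_le_card _).trans_eq (Fintype.card_fin k)

theorem samples_mem_geometricSpan {k : ℕ} {v : Fin k → ℂ} {fr : Fin k → ℝ} {f : ℝ → ℂ}
    (hf : ∀ x : ℝ, f x = ∑ j, v j *
      Complex.exp (2 * (Real.pi : ℂ) * Complex.I * (fr j : ℂ) * (x : ℂ)))
    (n : ℕ) (x Δ : ℝ) :
    WithLp.toLp 2 (fun m : Fin n ↦ f (x + m * Δ)) ∈
      geometricSpan (fun j ↦ Complex.exp (2 * Real.pi * Complex.I * fr j * Δ)) n := by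
  refine (Submodule.mem_span_range_iff_exists_fun ℂ).mpr
    ⟨fun j ↦ v j * Complex.exp (2 * Real.pi * Complex.I * fr j * x), ?_⟩
  ext m
  simp only [WithLp.ofLp_sum, WithLp.ofLp_smul, Finset.sum_apply, Pi.smul_apply, smul_eq_mul, hf]
  refine sum_congr rfl fun j _ ↦ ?_
  rw [mul_assoc, ← Complex.exp_nat_mul, ← Complex.exp_add]
  push_cast
  ring_nf

/-- a universal constant `C` such that every k-sparse exponential
sum satisfies `|f t|² ≤ C (∑_{i=1}^{2k} |f(t+iΔ)|² + ∑_{i=1}^{2k} |f(t−iΔ)|²)`. -/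
theorem stmt_9 :
    ∃ C : ℝ, 0 < C ∧ ∀ (k : ℕ) (v : Fin k → ℂ) (fr : Fin k → ℝ) (f : ℝ → ℂ),
      (∀ x : ℝ, f x = ∑ j, v j *
        Complex.exp (2 * (Real.pi : ℂ) * Complex.I * (fr j : ℂ) * (x : ℂ))) →
      ∀ Δ : ℝ, 0 < Δ → ∀ t : ℝ,
        ‖f t‖ ^ 2 ≤ C * ((∑ i ∈ Finset.Icc 1 (2 * k), ‖f (t + (i : ℝ) * Δ)‖ ^ 2) +
          (∑ i ∈ Finset.Icc 1 (2 * k), ‖f (t - (i : ℝ) * Δ)‖ ^ 2)) := by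
  refine ⟨1, one_pos, fun k v fr f hf Δ _ t ↦ ?_⟩
  rcases k.eq_zero_or_pos with rfl | hk
  · simp [hf]
  have : Nonempty (Fin (2 * k)) := ⟨⟨0, by omega⟩⟩
  obtain ⟨l, hl⟩ := exists_forall_mem_norm_sq_apply_le_sum_erase
    (geometricSpan (fun j ↦ Complex.exp (2 * Real.pi * Complex.I * fr j * Δ)) (2 * k))
    (by simpa using finrank_geometricSpan_le _ (2 * k))
  have hsamples := hl _ (samples_mem_geometricSpan hf (2 * k) (t - l * Δ) Δ)
  simp only [sub_add_cancel] at hsamples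
  calc ‖f t‖ ^ 2 ≤ ∑ j ∈ univ.erase l, ‖f (t - l * Δ + j * Δ)‖ ^ 2 := hsamples
    _ = ∑ j ∈ univ.erase l, ‖f (t + ((j - l : ℤ) : ℝ) * Δ)‖ ^ 2 :=
      sum_congr rfl fun j _ ↦ by push_cast; ring_nf
    _ ≤ _ := sum_erase_sub_le_sum_Icc_add_sum_Icc_neg
      (fun m : ℤ ↦ ‖f (t + m * Δ)‖ ^ 2) (fun _ ↦ by positivity) l
    _ = _ := by simp [sub_eq_add_neg]
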